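/- Let Γ be a group containing two subgroups Λ' and Λ'' that are both maximal abelian subgroups which are normal and of finite index in Γ. Suppose moreover that Λ' and Λ'' are finitely generated free abelian (so that a finite-index subgroup spans the same rational vector space). Then Λ' = Λ''. -/

import Mathlib

/-!
Every `b ∈ Λ''` centralizes `Λ'`: for `a ∈ Λ'` and `m` the index of `Λ''`, the power `a ^ m`
lies in the abelian `Λ''`, so `(b a b⁻¹) ^ m = a ^ m`, and as `Λ'` is normal and torsion-free,
`b a b⁻¹ = a`. Hence `Λ' ⊔ Λ''` is abelian, normal and of finite index, and maximality of both
subgroups gives `Λ' = Λ' ⊔ Λ'' = Λ''`.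
-/

namespace Subgroup

variable {G : Type*} [Group G]

theorem Normal.commute_of_commute_pow {N : Subgroup G} [IsMulTorsionFree N] (hN : N.Normal)
    {a b : G} (ha : a ∈ N) {m : ℕ} (hm : m ≠ 0) (h : Commute b (a ^ m)) : Commute b a := by
  have hconj_pow : (⟨b * a * b⁻¹, hN.conj_mem a ha b⟩ : N) ^ m = ⟨a, ha⟩ ^ m :=
    Subtype.ext <| by simp only [SubgroupClass.coe_pow, conj_pow, h.eq, mul_inv_cancel_right]
  have hconj : b * a * b⁻¹ = a := congrArg Subtype.val (pow_left_injective hm hconj_pow)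
  exact mul_inv_eq_iff_eq_mul.mp hconj

theorem Normal.commute_of_mem_of_finiteIndex {N H : Subgroup G} [IsMulTorsionFree N]
    (hN : N.Normal) [IsMulCommutative H] [H.Normal] [H.FiniteIndex] {a b : G} (ha : a ∈ N)
    (hb : b ∈ H) : Commute b a :=
  hN.commute_of_commute_pow ha FiniteIndex.index_ne_zero
    (setLike_mul_comm hb (H.pow_index_mem a))

theorem isMulCommutative_sup {H K : Subgroup G} [IsMulCommutative H] [IsMulCommutative K]
    (hHK : ∀ a ∈ H, ∀ b ∈ K, Commute a b) : IsMulCommutative ↥(H ⊔ K) := by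
  have hH : H ⊔ K ≤ centralizer H :=
    sup_le (le_centralizer_iff_isMulCommutative.mpr ‹_›)
      fun b hb ↦ mem_centralizer_iff.mpr fun a ha ↦ hHK a ha b hb
  have hK : H ⊔ K ≤ centralizer K :=
    sup_le (fun a ha ↦ mem_centralizer_iff.mpr fun b hb ↦ (hHK a ha b hb).symm)
      (le_centralizer_iff_isMulCommutative.mpr ‹_›)
  exact le_centralizer_iff_isMulCommutative.mp
    (sup_le (le_centralizer_iff.mp hH) (le_centralizer_iff.mp hK))

end Subgroup

theorem stmt15_general (Γ : Type*) [Group Γ] (n : ℕ) (Λ' Λ'' : Subgroup Γ)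
    (h1 : IsMulCommutative Λ') (h2 : Λ'.Normal) (h3 : Λ'.FiniteIndex)
    (h4 : Nonempty (Λ' ≃* Multiplicative (Fin n → ℤ)))
    (hmax1 : ∀ K : Subgroup Γ, IsMulCommutative K → K.Normal → K.FiniteIndex →
      Λ' ≤ K → Λ' = K)
    (h1' : IsMulCommutative Λ'') (h2' : Λ''.Normal) (h3' : Λ''.FiniteIndex)
    (hmax2 : ∀ K : Subgroup Γ, IsMulCommutative K → K.Normal → K.FiniteIndex →
      Λ'' ≤ K → Λ'' = K) :
    Λ' = Λ'' := by
  obtain ⟨e⟩ := h4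
  have : IsMulTorsionFree Λ' := e.injective.isMulTorsionFree e.toMonoidHom
  have hcomm : IsMulCommutative ↥(Λ' ⊔ Λ'') := Subgroup.isMulCommutative_sup
    fun a ha b hb ↦ (h2.commute_of_mem_of_finiteIndex ha hb).symm
  have hfi : (Λ' ⊔ Λ'').FiniteIndex := Subgroup.finiteIndex_of_le le_sup_left
  have hnormal := Subgroup.sup_normal Λ' Λ''
  exact (hmax1 _ hcomm hnormal hfi le_sup_left).trans
    (hmax2 _ hcomm hnormal hfi le_sup_right).symm

/-- If a group `Γ` contains two subgroups `Λ'`, `Λ''`, each abelian, normal, of finite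
index, free abelian of the same finite rank `n`, and each maximal among abelian normal
finite-index subgroups of `Γ`, then `Λ' = Λ''`. -/
theorem stmt15 (Γ : Type*) [Group Γ] (n : ℕ) (Λ' Λ'' : Subgroup Γ)
    (h1 : IsMulCommutative Λ') (h2 : Λ'.Normal) (h3 : Λ'.FiniteIndex)
    (h4 : Nonempty (Λ' ≃* Multiplicative (Fin n → ℤ)))
    (hmax1 : ∀ K : Subgroup Γ, IsMulCommutative K → K.Normal → K.FiniteIndex →
      Λ' ≤ K → Λ' = K)
    (h1' : IsMulCommutative Λ'') (h2' : Λ''.Normal) (h3' : Λ''.FiniteIndex)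
    (h4' : Nonempty (Λ'' ≃* Multiplicative (Fin n → ℤ)))
    (hmax2 : ∀ K : Subgroup Γ, IsMulCommutative K → K.Normal → K.FiniteIndex →
      Λ'' ≤ K → Λ'' = K) :
    Λ' = Λ'' :=
  stmt15_general Γ n Λ' Λ'' h1 h2 h3 h4 hmax1 h1' h2' h3' hmax2
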